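/- If n_1 ≤ n_2 ≤ ... ≤ n_m are positive integers with each n_i ≤ 5, and -2 + Σ_{i=1}^m (1 - 1/n_i) > 0, then -2 + Σ_{i=1}^m (1 - 1/n_i) ≥ 1/20. -/
import Mathlib

theorem adjunction_degree_ge_one_twentieth (m : ℕ) (n : Fin m → ℕ)
    (hmono : Monotone n) (hpos : ∀ i, 1 ≤ n i) (hle : ∀ i, n i ≤ 5)
    (hgt : (0 : ℝ) < -2 + ∑ i, (1 - 1 / (n i : ℝ))) :
    (1 : ℝ) / 20 ≤ -2 + ∑ i, (1 - 1 / (n i : ℝ)) := by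
  classical
  set N : ℕ := ∑ i, (60 - 60 / n i) with hN
  have hcast : (N : ℝ) = 60 * ∑ i, (1 - 1 / (n i : ℝ)) := by
    rw [hN, Nat.cast_sum, Finset.mul_sum]
    refine Finset.sum_congr rfl fun i _ => ?_
    have h1 := hpos i; have h2 := hle i
    interval_cases h : n i <;> norm_num
  have hfib : N = ∑ k ∈ Finset.Icc 1 5,
      (Finset.univ.filter (fun i => n i = k)).card * (60 - 60 / k) := by
    rw [hN, ← Finset.sum_fiberwise_of_maps_to
      (fun i _ => Finset.mem_Icc.2 ⟨hpos i, hle i⟩) (fun i => 60 - 60 / n i)]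
    refine Finset.sum_congr rfl fun k _ => ?_
    rw [Finset.sum_congr rfl (fun i hi => by rw [(Finset.mem_filter.1 hi).2]),
      Finset.sum_const, smul_eq_mul]
  have key : ∃ a b c d : ℕ, N = 30*a + 40*b + 45*c + 48*d := by
    refine ⟨(Finset.univ.filter (fun i => n i = 2)).card,
      (Finset.univ.filter (fun i => n i = 3)).card,
      (Finset.univ.filter (fun i => n i = 4)).card,
      (Finset.univ.filter (fun i => n i = 5)).card, ?_⟩
    rw [hfib, show Finset.Icc (1:ℕ) 5 = {1,2,3,4,5} from rfl]
    simp [Finset.sum_insert, Finset.mem_insert]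
    ring
  have h120 : 120 < N := by
    have : (120 : ℝ) < (N : ℝ) := by rw [hcast]; linarith
    exact_mod_cast this
  have h123 : 123 ≤ N := by
    obtain ⟨a, b, c, d, h⟩ := key
    by_contra hlt
    have ha : a ≤ 4 := by omega
    have hb : b ≤ 3 := by omega
    have hc : c ≤ 2 := by omega
    have hd : d ≤ 2 := by omega
    interval_cases a <;> interval_cases b <;> interval_cases c <;>
      interval_cases d <;> omega
  have : (123 : ℝ) ≤ (N : ℝ) := by exact_mod_cast h123
  rw [hcast] at this
  linarith
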